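/- Let K, H ∈ ℝ and T > 0. Suppose w : [0,T] → ℝ is twice continuously differentiable with w(0) = 1, w'(0) ≤ −H, and w''(r) + K·w(r) ≤ 0 for all r ∈ [0,T]. If the function φ_{K,H}(r) = s_K'(r) − H·s_K(r) is strictly positive on (0,T], then w(r) ≤ φ_{K,H}(r) for all r ∈ [0,T]. -/

import Mathlib

/-- The model function `s_K`: solution of `s'' + K s = 0` with `s(0)=0`, `s'(0)=1`. -/
noncomputable def sK (K : ℝ) : ℝ → ℝ := fun r =>
  if 0 < K then Real.sin (r * Real.sqrt K) / Real.sqrt K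
  else if K = 0 then r
  else Real.sinh (r * Real.sqrt |K|) / Real.sqrt |K|

/-- `φ_{K,H}(r) = s_K'(r) − H·s_K(r)`. -/
noncomputable def phiKH (K H : ℝ) : ℝ → ℝ := fun r => deriv (sK K) r - H * sK K r

/-- Auxiliary: the derivative of `sK`. -/
noncomputable def cK (K : ℝ) : ℝ → ℝ := fun r =>
  if 0 < K then Real.cos (r * Real.sqrt K)
  else if K = 0 then 1
  else Real.cosh (r * Real.sqrt |K|)

lemma hasDerivAt_sK (K r : ℝ) : HasDerivAt (sK K) (cK K r) r := by
  unfold sK cK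
  rcases lt_trichotomy 0 K with h | h | h
  · simp only [if_pos h]
    have hs : Real.sqrt K ≠ 0 := ne_of_gt (Real.sqrt_pos.mpr h)
    have h1 : HasDerivAt (fun x : ℝ => x * Real.sqrt K) (Real.sqrt K) r := by
      simpa using (hasDerivAt_id r).mul_const (Real.sqrt K)
    have h2 := ((Real.hasDerivAt_sin (r * Real.sqrt K)).comp r h1).div_const (Real.sqrt K)
    refine h2.congr_deriv ?_
    field_simp
  · subst h
    simpa using (hasDerivAt_id' r)
  · have h0 : ¬ 0 < K := not_lt.mpr h.le
    have hK0 : K ≠ 0 := ne_of_lt h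
    simp only [if_neg h0, if_neg hK0]
    have hs : Real.sqrt |K| ≠ 0 := ne_of_gt (Real.sqrt_pos.mpr (abs_pos.mpr hK0))
    have h1 : HasDerivAt (fun x : ℝ => x * Real.sqrt |K|) (Real.sqrt |K|) r := by
      simpa using (hasDerivAt_id r).mul_const (Real.sqrt |K|)
    have h2 := ((Real.hasDerivAt_sinh (r * Real.sqrt |K|)).comp r h1).div_const (Real.sqrt |K|)
    refine h2.congr_deriv ?_
    field_simp

lemma hasDerivAt_cK (K r : ℝ) : HasDerivAt (cK K) (-K * sK K r) r := by
  unfold sK cK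
  rcases lt_trichotomy 0 K with h | h | h
  · simp only [if_pos h]
    have hs : Real.sqrt K ≠ 0 := ne_of_gt (Real.sqrt_pos.mpr h)
    have hmul : Real.sqrt K * Real.sqrt K = K := Real.mul_self_sqrt h.le
    have h1 : HasDerivAt (fun x : ℝ => x * Real.sqrt K) (Real.sqrt K) r := by
      simpa using (hasDerivAt_id r).mul_const (Real.sqrt K)
    have h2 := (Real.hasDerivAt_cos (r * Real.sqrt K)).comp r h1
    refine h2.congr_deriv ?_
    field_simp
    linear_combination (-Real.sin (r * Real.sqrt K)) * hmul
  · subst h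
    simpa using (hasDerivAt_const r (1 : ℝ))
  · have h0 : ¬ 0 < K := not_lt.mpr h.le
    have hK0 : K ≠ 0 := ne_of_lt h
    simp only [if_neg h0, if_neg hK0]
    have hs : Real.sqrt |K| ≠ 0 := ne_of_gt (Real.sqrt_pos.mpr (abs_pos.mpr hK0))
    have hmul : Real.sqrt |K| * Real.sqrt |K| = |K| := Real.mul_self_sqrt (abs_nonneg K)
    have habs : |K| = -K := abs_of_neg h
    have h1 : HasDerivAt (fun x : ℝ => x * Real.sqrt |K|) (Real.sqrt |K|) r := by
      simpa using (hasDerivAt_id r).mul_const (Real.sqrt |K|)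
    have h2 := (Real.hasDerivAt_cosh (r * Real.sqrt |K|)).comp r h1
    refine h2.congr_deriv ?_
    rw [← habs]
    field_simp
    linear_combination (Real.sinh (r * Real.sqrt |K|)) * hmul

lemma phiKH_eq (K H r : ℝ) : phiKH K H r = cK K r - H * sK K r := by
  unfold phiKH
  rw [(hasDerivAt_sK K r).deriv]

lemma phiKH_eq_fun (K H : ℝ) : phiKH K H = fun r => cK K r - H * sK K r :=
  funext fun r => phiKH_eq K H r

lemma sK_zero (K : ℝ) : sK K 0 = 0 := by
  unfold sK; split_ifs <;> simp

lemma cK_zero (K : ℝ) : cK K 0 = 1 := by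
  unfold cK; split_ifs <;> simp

lemma phiKH_zero (K H : ℝ) : phiKH K H 0 = 1 := by
  rw [phiKH_eq, sK_zero, cK_zero]; ring

lemma hasDerivAt_phiKH (K H r : ℝ) :
    HasDerivAt (phiKH K H) (-K * sK K r - H * cK K r) r := by
  rw [phiKH_eq_fun]
  exact (hasDerivAt_cK K r).sub ((hasDerivAt_sK K r).const_mul H)

lemma hasDerivAt_phiKH' (K H r : ℝ) :
    HasDerivAt (fun x => -K * sK K x - H * cK K x) (-K * phiKH K H r) r := by
  have h := ((hasDerivAt_sK K r).const_mul (-K)).sub ((hasDerivAt_cK K r).const_mul H)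
  refine h.congr_deriv ?_
  rw [phiKH_eq]; ring

/-- Sturm-type comparison. If `w` is twice continuously differentiable on `[0,T]`
with `w(0) = 1`, `w'(0) ≤ −H` and `w'' + K w ≤ 0` on `[0,T]`, and `φ_{K,H} > 0` on `(0,T]`,
then `w ≤ φ_{K,H}` on `[0,T]`. -/
theorem sturm_comparison (K H T : ℝ) (hT : 0 < T)
    (w w' w'' : ℝ → ℝ)
    (hw' : ∀ r ∈ Set.Icc 0 T, HasDerivWithinAt w (w' r) (Set.Icc 0 T) r)
    (hw'' : ∀ r ∈ Set.Icc 0 T, HasDerivWithinAt w' (w'' r) (Set.Icc 0 T) r)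
    (hw''cont : ContinuousOn w'' (Set.Icc 0 T))
    (hw0 : w 0 = 1) (hw'0 : w' 0 ≤ -H)
    (hineq : ∀ r ∈ Set.Icc 0 T, w'' r + K * w r ≤ 0)
    (hphi : ∀ r ∈ Set.Ioc 0 T, 0 < phiKH K H r) :
    ∀ r ∈ Set.Icc 0 T, w r ≤ phiKH K H r := by
  set P : ℝ → ℝ := phiKH K H with hPdef
  set P' : ℝ → ℝ := fun x => -K * sK K x - H * cK K x with hP'def
  have hP : ∀ r : ℝ, HasDerivAt P (P' r) r := fun r => hasDerivAt_phiKH K H r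
  have hP' : ∀ r : ℝ, HasDerivAt P' (-K * P r) r := fun r => hasDerivAt_phiKH' K H r
  have hPpos : ∀ r ∈ Set.Icc (0:ℝ) T, 0 < P r := by
    intro r hr
    rcases eq_or_lt_of_le hr.1 with h0 | h0
    · rw [← h0, hPdef, phiKH_zero]; norm_num
    · exact hphi r ⟨h0, hr.2⟩
  set W : ℝ → ℝ := fun r => P r * w' r - P' r * w r with hWdef
  have hW : ∀ r ∈ Set.Icc (0:ℝ) T,
      HasDerivWithinAt W (P r * (w'' r + K * w r)) (Set.Icc 0 T) r := by
    intro r hr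
    have h1 := ((hP r).hasDerivWithinAt.mul (hw'' r hr)).sub
      ((hP' r).hasDerivWithinAt.mul (hw' r hr))
    refine h1.congr_deriv ?_
    ring
  have hIcc : Convex ℝ (Set.Icc (0:ℝ) T) := convex_Icc 0 T
  have hint : interior (Set.Icc (0:ℝ) T) = Set.Ioo 0 T := interior_Icc
  have hmem : ∀ x ∈ Set.Ioo (0:ℝ) T, Set.Icc (0:ℝ) T ∈ nhds x := by
    intro x hx
    exact Icc_mem_nhds hx.1 hx.2
  have hWanti : AntitoneOn W (Set.Icc 0 T) := by
    apply antitoneOn_of_deriv_nonpos hIcc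
    · exact fun x hx => (hW x hx).continuousWithinAt
    · rw [hint]
      intro x hx
      exact ((hW x ⟨hx.1.le, hx.2.le⟩).hasDerivAt (hmem x hx)).differentiableAt.differentiableWithinAt
    · rw [hint]
      intro x hx
      have hda := (hW x ⟨hx.1.le, hx.2.le⟩).hasDerivAt (hmem x hx)
      rw [hda.deriv]
      exact mul_nonpos_of_nonneg_of_nonpos (hPpos x ⟨hx.1.le, hx.2.le⟩).le
        (hineq x ⟨hx.1.le, hx.2.le⟩)
  have hW0 : W 0 ≤ 0 := by
    have hP0 : P 0 = 1 := phiKH_zero K H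
    have hP'0 : P' 0 = -H := by
      simp [hP'def, sK_zero, cK_zero]
    rw [hWdef]
    simp only [hP0, hP'0, hw0]
    linarith
  have hWle : ∀ r ∈ Set.Icc (0:ℝ) T, W r ≤ 0 := by
    intro r hr
    exact le_trans (hWanti (Set.left_mem_Icc.mpr hT.le) hr hr.1) hW0
  -- the quotient w / P is antitone
  set G : ℝ → ℝ := fun r => w r / P r with hGdef
  have hGanti : AntitoneOn G (Set.Icc 0 T) := by
    apply antitoneOn_of_deriv_nonpos hIcc
    · exact ContinuousOn.div
        (fun x hx => (hw' x hx).continuousWithinAt)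
        (fun x hx => (hP x).continuousAt.continuousWithinAt)
        (fun x hx => (hPpos x hx).ne')
    · rw [hint]
      intro x hx
      have hwx : HasDerivAt w (w' x) x :=
        (hw' x ⟨hx.1.le, hx.2.le⟩).hasDerivAt (hmem x hx)
      exact (hwx.div (hP x) (hPpos x ⟨hx.1.le, hx.2.le⟩).ne').differentiableAt.differentiableWithinAt
    · rw [hint]
      intro x hx
      have hxI : x ∈ Set.Icc (0:ℝ) T := ⟨hx.1.le, hx.2.le⟩
      have hwx : HasDerivAt w (w' x) x := (hw' x hxI).hasDerivAt (hmem x hx)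
      have hdiv := hwx.div (hP x) (hPpos x hxI).ne'
      rw [show G = w / P from rfl, hdiv.deriv]
      apply div_nonpos_of_nonpos_of_nonneg
      · have hWx : P x * w' x - P' x * w x ≤ 0 := hWle x hxI
        linarith [mul_comm (w' x) (P x), mul_comm (w x) (P' x)]
      · positivity
  intro r hr
  have hG0 : G 0 = 1 := by
    simp [hGdef, hw0, phiKH_zero K H, hPdef]
  have := hGanti (Set.left_mem_Icc.mpr hT.le) hr hr.1
  rw [hG0] at this
  have hPr := hPpos r hr
  calc w r = G r * P r := by rw [hGdef]; field_simp
    _ ≤ 1 * P r := mul_le_mul_of_nonneg_right this hPr.le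
    _ = phiKH K H r := by rw [one_mul]
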